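/- arXiv:1510.03191 — 3 statements merged into one kernel-verified Lean document; each statement's English description precedes it below -/
import Mathlib

section
/- Capacity of the two-hop half-duplex relay channel (Theorem 1): in the half-duplex two-hop relay setting, sup over joint PMFs p on X1 × X2 of min{ I(X1;Y1|X2), I(X2;Y2) } equals sup over P ∈ [0,1] of min{ (1 − P)·C1 , g(P) }, where C1 := max over PMFs q on X1 of I(q, W1(·|·,0)) and g(P) := sup over PMFs v on X2 with v(0) = 0 of I( (1−P)·δ0 + P·v , W2 ), with δ0 the point mass at 0 ∈ X2. -/
open Finset

/-- Mutual information `I(p, W)` (in bits) of a finite input distribution `p` and a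
channel `W`, with the convention that terms with `p a * W a b = 0` contribute `0`. -/
noncomputable def mutInfo {A B : Type*} [Fintype A] [Fintype B]
    (p : A → ℝ) (W : A → B → ℝ) : ℝ :=
  ∑ a, ∑ b, if p a * W a b = 0 then 0
    else p a * W a b * Real.logb 2 (W a b / ∑ a', p a' * W a' b)

/-- `p` is a probability mass function on the finite type `A`. -/
def IsPMF {A : Type*} [Fintype A] (p : A → ℝ) : Prop :=
  (∀ a, 0 ≤ p a) ∧ ∑ a, p a = 1

/-- The `X2`-marginal of a joint PMF on `X1 × X2`. -/
noncomputable def marg2 {X1 X2 : Type*} [Fintype X1] (p : X1 × X2 → ℝ) : X2 → ℝ :=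
  fun x2 => ∑ x1, p (x1, x2)

/-- The conditional mutual information `I(X1; Y1 | X2)` for a joint PMF `p` on `X1 × X2`
and source-relay channel `W1`. -/
noncomputable def condMI {X1 X2 Y1 : Type*} [Fintype X1] [Fintype X2] [Fintype Y1]
    (p : X1 × X2 → ℝ) (W1 : X1 → X2 → Y1 → ℝ) : ℝ :=
  ∑ x2, if 0 < marg2 p x2 then
      marg2 p x2 * mutInfo (fun x1 => p (x1, x2) / marg2 p x2) (fun x1 => W1 x1 x2)
    else 0


/-!
Under the half-duplex constraint the source is heard only while the relay listens, so
`I(X1;Y1|X2) = p2(0) · I(p(·|0), W1(·|·,0)) ≤ (1 - P_U) · C1`; and the relay's input law is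
`(1 - P_U) δ0 + P_U v` for some PMF `v` with `v(0) = 0`, so `I(X2;Y2) ≤ g(P_U)`.
Conversely, for fixed `P` the product of the law `(1 - P) δ0 + P v` with any source law `q`
achieves `min ((1 - P) · I(q, W1(·|·,0)), I((1 - P) δ0 + P v, W2))`; taking suprema over `q`
and `v` gives `min ((1 - P) · C1, g(P))`.
-/

section MutualInformation

variable {A B : Type*} [Fintype A] {p : A → ℝ} {W : A → B → ℝ}

lemma IsPMF.le_one (hp : IsPMF p) (a : A) : p a ≤ 1 :=
  hp.2 ▸ single_le_sum (fun a _ => hp.1 a) (mem_univ a)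

lemma IsPMF.one_sub_mem_Icc (hp : IsPMF p) (a : A) : 1 - p a ∈ Set.Icc (0 : ℝ) 1 :=
  ⟨sub_nonneg.2 (hp.le_one a), sub_le_self _ (hp.1 a)⟩

lemma IsPMF.dirac [DecidableEq A] (a₀ : A) : IsPMF fun a => if a = a₀ then (1 : ℝ) else 0 :=
  ⟨fun a => by by_cases h : a = a₀ <;> simp [h], by simp⟩

lemma IsPMF.eq_dirac_of_apply_eq_one [DecidableEq A] (hp : IsPMF p) {a₀ : A} (h : p a₀ = 1) :
    p = fun a => if a = a₀ then 1 else 0 := by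
  funext a
  split_ifs with ha
  · rw [ha, h]
  · have : p a₀ + p a ≤ 1 := by
      rw [← sum_pair (Ne.symm ha), ← hp.2]
      exact sum_le_univ_sum_of_nonneg hp.1
    linarith [hp.1 a]

lemma mul_le_sum_mul (hp : ∀ a, 0 ≤ p a) (hW : ∀ a b, 0 ≤ W a b) (a : A) (b : B) :
    p a * W a b ≤ ∑ a', p a' * W a' b :=
  single_le_sum (f := fun a' => p a' * W a' b)
    (fun a' _ => mul_nonneg (hp a') (hW a' b)) (mem_univ a)

variable [Fintype B]

lemma sum_sum_mul_eq_one (hp : IsPMF p) (hW : ∀ a, IsPMF (W a)) :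
    ∑ b, ∑ a, p a * W a b = 1 := by
  rw [sum_comm]
  simp_rw [← mul_sum, (hW _).2, mul_one, hp.2]

theorem mutInfo_nonneg (hp : IsPMF p) (hW : ∀ a, IsPMF (W a)) : 0 ≤ mutInfo p W := by
  set q : B → ℝ := fun b => ∑ a', p a' * W a' b
  have hq : ∀ b, 0 ≤ q b := fun b => sum_nonneg fun a _ => mul_nonneg (hp.1 a) ((hW a).1 b)
  -- Termwise `log x ≥ 1 - 1/x`; the lower bounds sum to `1 - 1 = 0`.
  have hterm : ∀ a b, (p a * W a b - p a * q b) / Real.log 2 ≤ if p a * W a b = 0 then 0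
      else p a * W a b * Real.logb 2 (W a b / q b) := by
    intro a b
    split_ifs with h
    · rw [h, zero_sub, neg_div]
      exact neg_nonpos.2 (div_nonneg (mul_nonneg (hp.1 a) (hq b)) (Real.log_nonneg one_le_two))
    · have hpW : 0 < p a * W a b := (mul_nonneg (hp.1 a) ((hW a).1 b)).lt_of_ne' h
      have hWab : 0 < W a b := pos_of_mul_pos_right hpW (hp.1 a)
      have hqb : 0 < q b := hpW.trans_le (mul_le_sum_mul hp.1 (fun a => (hW a).1) a b)
      rw [Real.logb, mul_div_assoc']
      gcongr
      calc p a * W a b - p a * q b = p a * W a b * (1 - (W a b / q b)⁻¹) := by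
            field_simp
        _ ≤ p a * W a b * Real.log (W a b / q b) :=
            mul_le_mul_of_nonneg_left (Real.one_sub_inv_le_log_of_pos (by positivity)) hpW.le
  calc (0 : ℝ) = ∑ a, ∑ b, (p a * W a b - p a * q b) / Real.log 2 := by
        simp_rw [← sum_div, sum_sub_distrib, ← mul_sum, (hW _).2, mul_one, hp.2, ← sum_mul, hp.2,
          one_mul, q, sum_sum_mul_eq_one hp hW, sub_self, zero_div]
    _ ≤ mutInfo p W := sum_le_sum fun a _ => sum_le_sum fun b _ => hterm a b

theorem mutInfo_le_card_div_log_two (hp : ∀ a, 0 ≤ p a) (hW : ∀ a, IsPMF (W a)) :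
    mutInfo p W ≤ Fintype.card A / Real.log 2 := by
  set q : B → ℝ := fun b => ∑ a', p a' * W a' b
  -- Termwise `log x ≤ x` and `p a * W a b ≤ q b`.
  have hterm : ∀ a b, (if p a * W a b = 0 then 0
      else p a * W a b * Real.logb 2 (W a b / q b)) ≤ W a b / Real.log 2 := by
    intro a b
    split_ifs with h
    · exact div_nonneg ((hW a).1 b) (Real.log_nonneg one_le_two)
    · have hpW : 0 < p a * W a b := (mul_nonneg (hp a) ((hW a).1 b)).lt_of_ne' h
      have hWab : 0 < W a b := pos_of_mul_pos_right hpW (hp a)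
      have hpWq : p a * W a b ≤ q b := mul_le_sum_mul hp (fun a => (hW a).1) a b
      have hqb : 0 < q b := hpW.trans_le hpWq
      rw [Real.logb, mul_div_assoc']
      gcongr
      calc p a * W a b * Real.log (W a b / q b) ≤ p a * W a b * (W a b / q b) :=
            mul_le_mul_of_nonneg_left ((Real.log_le_sub_one_of_pos (by positivity)).trans
              (sub_le_self _ zero_le_one)) hpW.le
        _ = W a b * (p a * W a b / q b) := by ring
        _ ≤ W a b * 1 := mul_le_mul_of_nonneg_left ((div_le_one hqb).2 hpWq) hWab.le
        _ = W a b := mul_one _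
  calc mutInfo p W ≤ ∑ a : A, ∑ b, W a b / Real.log 2 :=
        sum_le_sum fun a _ => sum_le_sum fun b _ => hterm a b
    _ = Fintype.card A / Real.log 2 := by
        simp_rw [← sum_div, (hW _).2, sum_const, card_univ, nsmul_eq_mul, mul_one]

theorem mutInfo_const_channel (hp : ∑ a, p a = 1) (w : B → ℝ) :
    mutInfo p (fun _ => w) = 0 := by
  refine sum_eq_zero fun a _ => sum_eq_zero fun b _ => ?_
  by_cases h : w b = 0 <;> simp [← sum_mul, hp, h]

end MutualInformation

lemma min_mul_sSup_le {s t : Set ℝ} {c x : ℝ} (hc : 0 ≤ c) (hx : 0 ≤ x)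
    (h : ∀ a ∈ s, ∀ b ∈ t, min (c * a) b ≤ x) : min (c * sSup s) (sSup t) ≤ x := by
  rw [← smul_eq_mul, ← Real.sSup_smul_of_nonneg hc]
  by_contra! hlt
  obtain ⟨hs, ht⟩ := lt_min_iff.1 hlt
  -- An empty set has supremum `0 ≤ x`.
  have hne : ∀ u : Set ℝ, x < sSup u → u.Nonempty := fun u hu =>
    Set.nonempty_iff_ne_empty.2 (by rintro rfl; rw [Real.sSup_empty] at hu; linarith)
  obtain ⟨_, ⟨a, ha, rfl⟩, hxa⟩ := exists_lt_of_lt_csSup (hne _ hs) hs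
  obtain ⟨b, hb, hxb⟩ := exists_lt_of_lt_csSup (hne _ ht) ht
  exact (h a ha b hb).not_gt (lt_min hxa hxb)

section Capacity

variable {A B : Type*} [Fintype A] [Fintype B] {W : A → B → ℝ}

noncomputable def capacity (W : A → B → ℝ) : ℝ :=
  sSup {r : ℝ | ∃ q : A → ℝ, IsPMF q ∧ r = mutInfo q W}

theorem capacity_nonneg (hW : ∀ a, IsPMF (W a)) : 0 ≤ capacity W :=
  Real.sSup_nonneg <| by rintro _ ⟨q, hq, rfl⟩; exact mutInfo_nonneg hq hW

theorem mutInfo_le_capacity (hW : ∀ a, IsPMF (W a)) {q : A → ℝ} (hq : IsPMF q) :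
    mutInfo q W ≤ capacity W :=
  le_csSup ⟨_, by rintro _ ⟨q, hq, rfl⟩; exact mutInfo_le_card_div_log_two hq.1 hW⟩ ⟨q, hq, rfl⟩

end Capacity

section RelayInput

variable {X Y : Type*} [DecidableEq X] {x0 : X} {P : ℝ} {v : X → ℝ}

/-- The relay listens (sends `x0`) with probability `1 - P`. -/
noncomputable def diracMix (x0 : X) (P : ℝ) (v : X → ℝ) : X → ℝ :=
  fun x => (1 - P) * (if x = x0 then 1 else 0) + P * v x

lemma diracMix_apply_self (hv0 : v x0 = 0) : diracMix x0 P v x0 = 1 - P := by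
  simp [diracMix, hv0]

variable [Fintype X] [Fintype Y] {W : X → Y → ℝ}

/-- The paper's `g(P)`. -/
noncomputable def relayRate (W : X → Y → ℝ) (x0 : X) (P : ℝ) : ℝ :=
  sSup {r : ℝ | ∃ v : X → ℝ, IsPMF v ∧ v x0 = 0 ∧ r = mutInfo (diracMix x0 P v) W}

lemma IsPMF.diracMix (hv : IsPMF v) (hP : P ∈ Set.Icc (0 : ℝ) 1) :
    IsPMF (diracMix x0 P v) := by
  refine ⟨fun x => ?_, ?_⟩
  · exact add_nonneg (mul_nonneg (sub_nonneg.2 hP.2) (ite_nonneg zero_le_one le_rfl))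
      (mul_nonneg hP.1 (hv.1 x))
  · simp [_root_.diracMix, sum_add_distrib, ← mul_sum, hv.2]

theorem exists_diracMix_eq {m : X → ℝ} (hm : IsPMF m) {x' : X} (hx' : x' ≠ x0) :
    ∃ v, IsPMF v ∧ v x0 = 0 ∧ diracMix x0 (1 - m x0) v = m := by
  rcases (hm.le_one x0).eq_or_lt with h | h
  · refine ⟨_, IsPMF.dirac x', if_neg hx'.symm, ?_⟩
    rw [h, hm.eq_dirac_of_apply_eq_one h]
    funext x
    simp [diracMix]
  · have h0 : 1 - m x0 ≠ 0 := (sub_pos.2 h).ne'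
    refine ⟨fun x => (m x - m x0 * if x = x0 then 1 else 0) / (1 - m x0), ⟨fun x => ?_, ?_⟩,
      by simp, ?_⟩
    · by_cases hx : x = x0
      · simp [hx]
      · simpa [hx] using div_nonneg (hm.1 x) (sub_pos.2 h).le
    · simp [← sum_div, sum_sub_distrib, hm.2, div_self h0]
    · funext x
      simp only [diracMix]
      field_simp
      ring

lemma relayRate_nonneg (hW : ∀ x, IsPMF (W x)) (hP : P ∈ Set.Icc (0 : ℝ) 1) :
    0 ≤ relayRate W x0 P :=
  Real.sSup_nonneg <| by rintro _ ⟨v, hv, -, rfl⟩; exact mutInfo_nonneg (hv.diracMix hP) hW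

lemma relayRate_le (hW : ∀ x, IsPMF (W x)) (hP : P ∈ Set.Icc (0 : ℝ) 1) :
    relayRate W x0 P ≤ Fintype.card X / Real.log 2 :=
  Real.sSup_le
    (by rintro _ ⟨v, hv, -, rfl⟩; exact mutInfo_le_card_div_log_two (hv.diracMix hP).1 hW)
    (by positivity)

lemma mutInfo_diracMix_le_relayRate (hW : ∀ x, IsPMF (W x)) (hP : P ∈ Set.Icc (0 : ℝ) 1)
    (hv : IsPMF v) (hv0 : v x0 = 0) : mutInfo (diracMix x0 P v) W ≤ relayRate W x0 P :=
  le_csSup ⟨_, by rintro _ ⟨v, hv, -, rfl⟩; exact mutInfo_le_card_div_log_two (hv.diracMix hP).1 hW⟩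
    ⟨v, hv, hv0, rfl⟩

theorem mutInfo_le_relayRate (hW : ∀ x, IsPMF (W x)) {m : X → ℝ} (hm : IsPMF m) {x' : X}
    (hx' : x' ≠ x0) : mutInfo m W ≤ relayRate W x0 (1 - m x0) := by
  obtain ⟨v, hv, hv0, hmv⟩ := exists_diracMix_eq hm hx'
  simpa only [hmv] using mutInfo_diracMix_le_relayRate hW (hm.one_sub_mem_Icc x0) hv hv0

end RelayInput

section Marginals

variable {X1 X2 : Type*} [Fintype X1] {p : X1 × X2 → ℝ}

lemma marg2_nonneg (hp : ∀ x, 0 ≤ p x) (x2 : X2) : 0 ≤ marg2 p x2 :=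
  sum_nonneg fun x1 _ => hp (x1, x2)

lemma sum_div_marg2 {x2 : X2} (h : marg2 p x2 ≠ 0) :
    ∑ x1, p (x1, x2) / marg2 p x2 = 1 := by
  rw [← sum_div]
  exact div_self h

lemma isPMF_div_marg2 (hp : ∀ x, 0 ≤ p x) {x2 : X2} (h : 0 < marg2 p x2) :
    IsPMF fun x1 => p (x1, x2) / marg2 p x2 :=
  ⟨fun _ => div_nonneg (hp _) h.le, sum_div_marg2 h.ne'⟩

lemma marg2_prod (m : X2 → ℝ) {q : X1 → ℝ} (hq : ∑ x1, q x1 = 1) :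
    marg2 (fun x : X1 × X2 => m x.2 * q x.1) = m := by
  funext x2
  simp [marg2, ← mul_sum, hq]

variable [Fintype X2]

lemma IsPMF.marg2 (hp : IsPMF p) : IsPMF (marg2 p) := by
  refine ⟨marg2_nonneg hp.1, ?_⟩
  rw [← hp.2, Fintype.sum_prod_type, sum_comm]
  rfl

lemma IsPMF.prod {m : X2 → ℝ} {q : X1 → ℝ} (hm : IsPMF m) (hq : IsPMF q) :
    IsPMF fun x : X1 × X2 => m x.2 * q x.1 := by
  refine ⟨fun x => mul_nonneg (hm.1 _) (hq.1 _), ?_⟩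
  simp [Fintype.sum_prod_type_right, ← mul_sum, hq.2, hm.2]

end Marginals

section HalfDuplex

variable {X1 X2 Y1 : Type*} [Fintype X1] [Fintype X2] [Fintype Y1] {p : X1 × X2 → ℝ}
  {W1 : X1 → X2 → Y1 → ℝ} {x0 : X2} {w : X2 → Y1 → ℝ}

theorem condMI_nonneg (hp : ∀ x, 0 ≤ p x) (hW1 : ∀ x1 x2, IsPMF (W1 x1 x2)) : 0 ≤ condMI p W1 :=
  sum_nonneg fun x2 _ => by
    split_ifs with h
    · exact mul_nonneg h.le (mutInfo_nonneg (isPMF_div_marg2 hp h) (hW1 · x2))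
    · exact le_rfl

theorem condMI_eq_of_halfDuplex (hHD : ∀ x1 x2, x2 ≠ x0 → W1 x1 x2 = w x2)
    (hp : ∀ x, 0 ≤ p x) :
    condMI p W1 = marg2 p x0 * mutInfo (fun x1 => p (x1, x0) / marg2 p x0) (W1 · x0) := by
  rw [condMI, sum_eq_single x0]
  · rcases (marg2_nonneg hp x0).eq_or_lt with h | h
    · simp [← h]
    · exact if_pos h
  · intro x2 _ hx2
    split_ifs with h
    · rw [show (W1 · x2) = fun _ => w x2 from funext (hHD · x2 hx2),
        mutInfo_const_channel (sum_div_marg2 h.ne'), mul_zero]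
    · rfl
  · simp

theorem condMI_le_of_halfDuplex (hHD : ∀ x1 x2, x2 ≠ x0 → W1 x1 x2 = w x2)
    (hp : ∀ x, 0 ≤ p x) (hW1 : ∀ x1, IsPMF (W1 x1 x0)) :
    condMI p W1 ≤ marg2 p x0 * capacity (W1 · x0) := by
  rw [condMI_eq_of_halfDuplex hHD hp]
  rcases (marg2_nonneg hp x0).eq_or_lt with h | h
  · simp [← h]
  · exact mul_le_mul_of_nonneg_left (mutInfo_le_capacity hW1 (isPMF_div_marg2 hp h)) h.le

theorem condMI_prod_of_halfDuplex (hHD : ∀ x1 x2, x2 ≠ x0 → W1 x1 x2 = w x2) {m : X2 → ℝ}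
    {q : X1 → ℝ} (hm : ∀ x2, 0 ≤ m x2) (hq : IsPMF q) :
    condMI (fun x : X1 × X2 => m x.2 * q x.1) W1 = m x0 * mutInfo q (W1 · x0) := by
  rw [condMI_eq_of_halfDuplex hHD fun x => mul_nonneg (hm _) (hq.1 _), marg2_prod m hq.2]
  rcases eq_or_ne (m x0) 0 with h | h
  · simp [h]
  · simp only [mul_div_cancel_left₀ _ h]

end HalfDuplex

/-- Theorem 1: the capacity of the two-hop half-duplex relay channel,
`sup_p min{ I(X1;Y1|X2), I(X2;Y2) }`, equals
`sup_{P ∈ [0,1]} min{ (1 − P)·C1, g(P) }` where `C1` is the capacity of the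
source-relay channel in reception mode and
`g(P) = sup { I((1−P)·δ0 + P·v, W2) : v PMF on X2 with v(0) = 0 }`. -/
theorem capacity_two_hop_HD_relay
    {X1 X2 Y1 Y2 : Type*} [Fintype X1] [Fintype X2] [Fintype Y1] [Fintype Y2]
    [DecidableEq X2] [DecidableEq Y1]
    (hX2 : 2 ≤ Fintype.card X2) (x0 : X2) (y0 : Y1)
    (W1 : X1 → X2 → Y1 → ℝ) (hW1 : ∀ x1 x2, IsPMF (W1 x1 x2))
    (hHD : ∀ x1 x2, x2 ≠ x0 → W1 x1 x2 = fun y1 => if y1 = y0 then 1 else 0)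
    (W2 : X2 → Y2 → ℝ) (hW2 : ∀ x2, IsPMF (W2 x2))
    (C1 : ℝ)
    (hC1 : C1 = sSup {r : ℝ | ∃ q : X1 → ℝ, IsPMF q ∧ r = mutInfo q (fun x1 => W1 x1 x0)})
    (g : ℝ → ℝ)
    (hg : ∀ P, g P = sSup {r : ℝ | ∃ v : X2 → ℝ, IsPMF v ∧ v x0 = 0 ∧
      r = mutInfo (fun x2 => (1 - P) * (if x2 = x0 then 1 else 0) + P * v x2) W2}) :
    sSup {r : ℝ | ∃ p : X1 × X2 → ℝ, IsPMF p ∧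
        r = min (condMI p W1) (mutInfo (marg2 p) W2)} =
    sSup {r : ℝ | ∃ P ∈ Set.Icc (0:ℝ) 1, r = min ((1 - P) * C1) (g P)} := by
  obtain ⟨x', hx'⟩ := Fintype.exists_ne_of_one_lt_card hX2 x0
  obtain rfl : C1 = capacity (W1 · x0) := hC1
  obtain rfl : g = relayRate W2 x0 := funext hg
  set L := {r : ℝ | ∃ p : X1 × X2 → ℝ, IsPMF p ∧ r = min (condMI p W1) (mutInfo (marg2 p) W2)}
  set R := {r : ℝ | ∃ P ∈ Set.Icc (0:ℝ) 1,
    r = min ((1 - P) * capacity (W1 · x0)) (relayRate W2 x0 P)}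
  have hL_bdd : BddAbove L := ⟨_, by
    rintro _ ⟨p, hp, rfl⟩
    exact (min_le_right _ _).trans (mutInfo_le_card_div_log_two hp.marg2.1 hW2)⟩
  have hR_bdd : BddAbove R := ⟨_, by
    rintro _ ⟨P, hP, rfl⟩; exact (min_le_right _ _).trans (relayRate_le hW2 hP)⟩
  have hL_nonneg : 0 ≤ sSup L := Real.sSup_nonneg <| by
    rintro _ ⟨p, hp, rfl⟩; exact le_min (condMI_nonneg hp.1 hW1) (mutInfo_nonneg hp.marg2 hW2)
  have hR_nonneg : 0 ≤ sSup R := Real.sSup_nonneg <| by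
    rintro _ ⟨P, hP, rfl⟩
    exact le_min (mul_nonneg (sub_nonneg.2 hP.2) (capacity_nonneg (hW1 · x0)))
      (relayRate_nonneg hW2 hP)
  refine le_antisymm (Real.sSup_le ?_ hR_nonneg) (Real.sSup_le ?_ hL_nonneg)
  · rintro _ ⟨p, hp, rfl⟩
    refine le_csSup_of_le hR_bdd ⟨_, hp.marg2.one_sub_mem_Icc x0, rfl⟩
      (min_le_min ?_ (mutInfo_le_relayRate hW2 hp.marg2 hx'))
    rw [sub_sub_cancel]
    exact condMI_le_of_halfDuplex hHD hp.1 (hW1 · x0)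
  · rintro _ ⟨P, hP, rfl⟩
    refine min_mul_sSup_le (sub_nonneg.2 hP.2) hL_nonneg ?_
    rintro _ ⟨q, hq, rfl⟩ _ ⟨v, hv, hv0, rfl⟩
    have hm : IsPMF (diracMix x0 P v) := hv.diracMix hP
    refine le_csSup_of_le hL_bdd ⟨_, hm.prod hq, rfl⟩ (le_of_eq ?_)
    rw [condMI_prod_of_halfDuplex hHD hm.1 hq, marg2_prod _ hq.2,
      diracMix_apply_self hv0]
end

section
/- Max-min optimization lemma underlying Theorem 1 (intersection case): let c > 0 and let g : [0,1] → ℝ be continuous and concave with g(0) = 0, and suppose P'' ∈ (0,1] attains the maximum of g over [0,1] and satisfies g(P'') > c·(1 − P''). Then there exists a unique P' ∈ (0, P'') with c·(1 − P') = g(P'), and sup over P ∈ [0,1] of min{ c·(1 − P), g(P) } = c·(1 − P') = g(P'). -/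
/-!
Let `f x = c * (1 - x) - g x`, which is convex, positive at `0` and negative at `P''`. The
intermediate value theorem gives a zero `P'` in `(0, P'')`, and convexity rules out a second one:
a zero strictly between another zero and `P''` would have to be positive. Since `g` is concave with
its maximum at `P''`, it is monotone on `[0, P'']`; so left of `P'` the minimum is bounded by
`g P' = c * (1 - P')`, and right of `P'` by the decreasing line `c * (1 - P)`.
-/

open Set

section Convexity

variable {𝕜 β : Type*} [Field 𝕜] [LinearOrder 𝕜] [IsStrictOrderedRing 𝕜]
  [AddCommGroup β] [LinearOrder β] [IsOrderedAddMonoid β] [Module 𝕜 β] [IsStrictOrderedModule 𝕜 β]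
  {s : Set 𝕜}

theorem ConcaveOn.monotoneOn_of_isMaxOn {f : 𝕜 → β} {m : 𝕜} (hf : ConcaveOn 𝕜 s f) (hm : m ∈ s)
    (hmax : IsMaxOn f s m) : MonotoneOn f (s ∩ Iic m) := by
  rintro x ⟨hx, -⟩ y ⟨-, hym⟩ hxy
  calc f x = min (f x) (f m) := (min_eq_left (isMaxOn_iff.1 hmax x hx)).symm
    _ ≤ f y := hf.min_le_of_mem_Icc hx hm ⟨hxy, hym⟩

theorem ConvexOn.eq_of_map_eq_of_map_right_lt {f : 𝕜 → β} {x y b : 𝕜} (hf : ConvexOn 𝕜 s f)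
    (hx : x ∈ s) (hy : y ∈ s) (hb : b ∈ s) (hxb : x < b) (hyb : y < b) (hfb : f b < f x)
    (hfxy : f x = f y) : x = y := by
  rcases lt_trichotomy x y with hlt | heq | hgt
  · have hfy_lt := hf.lt_left_of_right_lt hx hb (Ioo_subset_openSegment ⟨hlt, hyb⟩) (hfxy ▸ hfb)
    exact absurd hfxy hfy_lt.ne'
  · exact heq
  · have hfx_lt := hf.lt_left_of_right_lt hy hb (Ioo_subset_openSegment ⟨hgt, hxb⟩) hfb
    exact absurd hfxy hfx_lt.ne

end Convexity

theorem isGreatest_min_of_crossing {α β : Type*} [LinearOrder α] [LinearOrder β] {s : Set α}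
    {u v : α → β} {p : α} (hp : p ∈ s) (hu : ∀ x ∈ s, p ≤ x → u x ≤ u p)
    (hv : ∀ x ∈ s, x ≤ p → v x ≤ v p) (huv : u p = v p) :
    IsGreatest {r | ∃ x ∈ s, r = min (u x) (v x)} (u p) := by
  refine ⟨⟨p, hp, by rw [huv, min_self]⟩, ?_⟩
  rintro _ ⟨x, hx, rfl⟩
  rcases le_total p x with hpx | hxp
  · exact (min_le_left _ _).trans (hu x hx hpx)
  · exact (min_le_right _ _).trans ((hv x hx hxp).trans huv.ge)

theorem convexOn_mul_one_sub (c : ℝ) {s : Set ℝ} (hs : Convex ℝ s) :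
    ConvexOn ℝ s fun x => c * (1 - x) :=
  ⟨hs, fun x _ y _ a b _ _ hab => le_of_eq <| by
    simp only [smul_eq_mul]; linear_combination -c * hab⟩

/-- max-min optimization lemma underlying Theorem 1, intersection case:
let `c > 0` and let `g : [0,1] → ℝ` be continuous and concave with `g 0 = 0`, and suppose
`P'' ∈ (0,1]` attains the maximum of `g` over `[0,1]` and satisfies `g P'' > c·(1 − P'')`.
Then there is a unique `P' ∈ (0, P'')` with `c·(1 − P') = g P'`, and
`sup_{P ∈ [0,1]} min{ c·(1 − P), g P } = c·(1 − P') = g P'`. -/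
theorem maxmin_intersection_case (c : ℝ) (hc : 0 < c) (g : ℝ → ℝ)
    (hgcont : ContinuousOn g (Set.Icc (0:ℝ) 1))
    (hgconc : ConcaveOn ℝ (Set.Icc (0:ℝ) 1) g)
    (hg0 : g 0 = 0)
    (P'' : ℝ) (hPmem : P'' ∈ Set.Ioc (0:ℝ) 1)
    (hmax : ∀ P ∈ Set.Icc (0:ℝ) 1, g P ≤ g P'')
    (hgt : c * (1 - P'') < g P'') :
    ∃ P' ∈ Set.Ioo (0:ℝ) P'',
      c * (1 - P') = g P' ∧
      (∀ Q ∈ Set.Ioo (0:ℝ) P'', c * (1 - Q) = g Q → Q = P') ∧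
      sSup {r : ℝ | ∃ P ∈ Set.Icc (0:ℝ) 1, r = min (c * (1 - P)) (g P)} = c * (1 - P') := by
  set f : ℝ → ℝ := fun x => c * (1 - x) - g x
  have hP''_mem : P'' ∈ Icc (0:ℝ) 1 := Ioc_subset_Icc_self hPmem
  have hsub : Ioo 0 P'' ⊆ Icc (0:ℝ) 1 := Ioo_subset_Icc_self.trans (Icc_subset_Icc le_rfl hPmem.2)
  have hf_conv : ConvexOn ℝ (Icc 0 1) f := (convexOn_mul_one_sub c (convex_Icc 0 1)).sub hgconc
  have hf_neg : f P'' < 0 := sub_neg.2 hgt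
  obtain ⟨P', hP', hfP'⟩ : ∃ P' ∈ Ioo 0 P'', f P' = 0 := by
    have hf_cont : ContinuousOn f (Icc 0 P'') :=
      (continuous_const.mul (continuous_const.sub continuous_id)).continuousOn.sub
        (hgcont.mono (Icc_subset_Icc le_rfl hPmem.2))
    exact intermediate_value_Ioo' hPmem.1.le hf_cont ⟨hf_neg, by simp [f, hg0, hc]⟩
  have hcross : c * (1 - P') = g P' := sub_eq_zero.1 hfP'
  refine ⟨P', hP', hcross, fun Q hQ hQeq => ?_, ?_⟩
  · exact hf_conv.eq_of_map_eq_of_map_right_lt (hsub hQ) (hsub hP') hP''_mem hQ.2 hP'.2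
      (by simpa [f, hQeq] using hf_neg) (by simp [f, hQeq, hcross])
  · have hg_mono := hgconc.monotoneOn_of_isMaxOn hP''_mem (isMaxOn_iff.2 hmax)
    refine (isGreatest_min_of_crossing (hsub hP') (fun x _ hx => ?_) (fun x hx hxP' => ?_)
      hcross).csSup_eq
    · exact mul_le_mul_of_nonneg_left (by linarith) hc.le
    · exact hg_mono ⟨hx, hxP'.trans hP'.2.le⟩ ⟨hsub hP', hP'.2.le⟩ hxP'
end

section
/- Capacity of the two-hop half-duplex relay channel with binary-symmetric links (Corollary 1): let ε1, ε2 ∈ [0,1], let X1 = X2 = Y1 = Y2 = {0,1}, let W1 be the channel with W1(·|x1, 1) the point mass at 0 and W1(y1|x1, 0) = 1 − ε1 if y1 = x1 and ε1 otherwise, and let W2(y2|x2) = 1 − ε2 if y2 = x2 and ε2 otherwise. Then sup over joint PMFs p on X1 × X2 of min{ I(X1;Y1|X2), I(X2;Y2) } = max over P ∈ [0,1] of min{ (1 − H(ε1))·(1 − P), H(ε2·(1 − 2P) + P) − H(ε2) }. -/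
open Finset

/-- The binary entropy function (in bits), with the convention `0·log2 0 = 0`. -/
noncomputable def binH (p : ℝ) : ℝ :=
  -(p * Real.logb 2 p) - (1 - p) * Real.logb 2 (1 - p)

/-!
Both rates depend on the input only through the relay's marginal `P = Pr[X2 = 1]`. The
relay-destination rate is exactly `H(ε2 (1 - 2P) + P) - H(ε2)`, by `I = H(Y) - H(Y|X)`. The
source-relay rate `I(X1;Y1|X2)` gets nothing while the relay transmits and at most the BSC
capacity `1 - H(ε1)` while it listens, so it is at most `(1 - P)(1 - H(ε1))`, with equality for
a uniform source input independent of `X2`. Hence each value of the left-hand set is dominated by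
one of the right-hand set and conversely.
-/

open Real

noncomputable def bsc (ε : ℝ) : Fin 2 → Fin 2 → ℝ :=
  fun x y => if y = x then 1 - ε else ε

noncomputable def halfDuplexBSC (ε : ℝ) : Fin 2 → Fin 2 → Fin 2 → ℝ :=
  fun x1 x2 y1 => if x2 = 0 then bsc ε x1 y1 else if y1 = 0 then 1 else 0

lemma binH_eq_binEntropy_div_log_two (p : ℝ) : binH p = binEntropy p / log 2 := by
  simp only [binH, binEntropy, logb, log_inv]
  ring

lemma binH_le_one (p : ℝ) : binH p ≤ 1 := by
  rw [binH_eq_binEntropy_div_log_two, div_le_one (by positivity)]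
  exact binEntropy_le_log_two

lemma binH_two_inv : binH 2⁻¹ = 1 := by
  rw [binH_eq_binEntropy_div_log_two, binEntropy_two_inv, div_self (by positivity)]

section mutInfo

variable {A B : Type*} [Fintype A] [Fintype B] {p : A → ℝ} {W : A → B → ℝ}

lemma mutInfo_eq_sub (hp : ∀ a, 0 ≤ p a) (hW : ∀ a b, 0 ≤ W a b) :
    mutInfo p W = ∑ a, p a * ∑ b, W a b * logb 2 (W a b)
      - ∑ b, (∑ a, p a * W a b) * logb 2 (∑ a, p a * W a b) := by
  have hterm : ∀ a b, (if p a * W a b = 0 then 0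
      else p a * W a b * logb 2 (W a b / ∑ a', p a' * W a' b))
      = p a * W a b * logb 2 (W a b) - p a * W a b * logb 2 (∑ a', p a' * W a' b) := by
    intro a b
    split_ifs with h
    · simp [h]
    · have hout : 0 < ∑ a', p a' * W a' b :=
        ((mul_nonneg (hp a) (hW a b)).lt_of_ne' h).trans_le
          (single_le_sum (fun a' _ => mul_nonneg (hp a') (hW a' b)) (mem_univ a))
      rw [logb_div (right_ne_zero_of_mul h) hout.ne', mul_sub]
  simp only [mutInfo, hterm, sum_sub_distrib]
  simp only [mul_sum, sum_mul, mul_assoc]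
  exact congrArg (_ - ·) sum_comm

lemma mutInfo_eq_zero_of_const (V : B → ℝ) (hp : ∑ a, p a = 1) :
    mutInfo p (fun _ => V) = 0 := by
  refine sum_eq_zero fun a _ => sum_eq_zero fun b _ => ?_
  split_ifs with h
  · rfl
  · rw [← sum_mul, hp, one_mul, div_self (right_ne_zero_of_mul h), logb_one, mul_zero]

end mutInfo

section PMF

variable {X1 X2 : Type*} [Fintype X1]

lemma IsPMF.apply_zero_eq {q : Fin 2 → ℝ} (hq : IsPMF q) : q 0 = 1 - q 1 := by
  linarith [hq.2, Fin.sum_univ_two q]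

lemma isPMF_uniform_fin_two : IsPMF (fun _ : Fin 2 => (2⁻¹ : ℝ)) :=
  ⟨fun _ => by norm_num, by norm_num⟩

lemma isPMF_vecCons_one_sub {P : ℝ} (hP : P ∈ Set.Icc (0 : ℝ) 1) : IsPMF ![1 - P, P] :=
  ⟨fun x => by fin_cases x <;> simp [hP.1, hP.2], by simp [Fin.sum_univ_two]⟩

lemma isPMF_marg2 [Fintype X2] {p : X1 × X2 → ℝ} (hp : IsPMF p) : IsPMF (marg2 p) :=
  ⟨fun _ => sum_nonneg fun _ _ => hp.1 _, by rw [← hp.2, Fintype.sum_prod_type_right]; rfl⟩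

lemma isPMF_cond [Fintype X2] {p : X1 × X2 → ℝ} (hp : IsPMF p) {x2 : X2}
    (hx2 : 0 < marg2 p x2) : IsPMF (fun x1 => p (x1, x2) / marg2 p x2) :=
  ⟨fun _ => div_nonneg (hp.1 _) hx2.le, by rw [← sum_div]; exact div_self hx2.ne'⟩

lemma isPMF_prod [Fintype X2] {u : X1 → ℝ} {q : X2 → ℝ} (hu : IsPMF u) (hq : IsPMF q) :
    IsPMF (fun z : X1 × X2 => u z.1 * q z.2) :=
  ⟨fun _ => mul_nonneg (hu.1 _) (hq.1 _), by
    rw [Fintype.sum_prod_type, ← sum_mul_sum, hu.2, hq.2, one_mul]⟩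

lemma marg2_mul {u : X1 → ℝ} (hu : ∑ x1, u x1 = 1) (q : X2 → ℝ) :
    marg2 (fun z : X1 × X2 => u z.1 * q z.2) = q := by
  funext x2
  simp only [marg2, ← sum_mul, hu, one_mul]

end PMF

section condMI

variable {X1 X2 Y1 : Type*} [Fintype X1] [Fintype X2] [Fintype Y1] {W1 : X1 → X2 → Y1 → ℝ}

lemma condMI_le_sum {p : X1 × X2 → ℝ} (hp : IsPMF p) (C : X2 → ℝ)
    (hC : ∀ x2, 0 < marg2 p x2 →
      mutInfo (fun x1 => p (x1, x2) / marg2 p x2) (fun x1 => W1 x1 x2) ≤ C x2) :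
    condMI p W1 ≤ ∑ x2, marg2 p x2 * C x2 := by
  refine sum_le_sum fun x2 _ => ?_
  split_ifs with h
  · exact mul_le_mul_of_nonneg_left (hC x2 h) h.le
  · rw [le_antisymm (not_lt.mp h) ((isPMF_marg2 hp).1 x2), zero_mul]

lemma condMI_mul {u : X1 → ℝ} {q : X2 → ℝ} (hu : ∑ x1, u x1 = 1)
    (hq : ∀ x2, 0 ≤ q x2) : condMI (fun z : X1 × X2 => u z.1 * q z.2) W1
      = ∑ x2, q x2 * mutInfo u (fun x1 => W1 x1 x2) := by
  refine sum_congr rfl fun x2 _ => ?_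
  rw [marg2_mul hu]
  split_ifs with h
  · congr 2
    funext x1
    exact mul_div_cancel_right₀ _ h.ne'
  · rw [le_antisymm (not_lt.mp h) (hq x2), zero_mul]

end condMI

section BSC

variable {ε : ℝ}

lemma bsc_nonneg (hε : ε ∈ Set.Icc (0 : ℝ) 1) (x y : Fin 2) : 0 ≤ bsc ε x y := by
  unfold bsc
  split_ifs <;> linarith [hε.1, hε.2]

lemma sum_bsc_mul_logb (x : Fin 2) : ∑ y, bsc ε x y * logb 2 (bsc ε x y) = -binH ε := by
  fin_cases x <;> simp [bsc, binH, Fin.sum_univ_two, add_comm]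

lemma mutInfo_bsc (hε : ε ∈ Set.Icc (0 : ℝ) 1) {q : Fin 2 → ℝ} (hq : IsPMF q) :
    mutInfo q (bsc ε) = binH (ε * (1 - 2 * q 1) + q 1) - binH ε := by
  have hout0 : ∑ x, q x * bsc ε x 0 = 1 - (ε * (1 - 2 * q 1) + q 1) := by
    simp only [bsc, mul_ite, Fin.sum_univ_two, ↓reduceIte, hq.apply_zero_eq, zero_ne_one]
    ring
  have hout1 : ∑ x, q x * bsc ε x 1 = ε * (1 - 2 * q 1) + q 1 := by
    simp only [bsc, mul_ite, Fin.sum_univ_two, one_ne_zero, ↓reduceIte, hq.apply_zero_eq]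
    ring
  rw [mutInfo_eq_sub hq.1 (bsc_nonneg hε)]
  simp only [sum_bsc_mul_logb, ← sum_mul, hq.2,
    Fin.sum_univ_two (f := fun y => (∑ x, q x * bsc ε x y) * _), hout0, hout1, binH]
  ring

lemma mutInfo_bsc_le (hε : ε ∈ Set.Icc (0 : ℝ) 1) {q : Fin 2 → ℝ} (hq : IsPMF q) :
    mutInfo q (bsc ε) ≤ 1 - binH ε := by
  rw [mutInfo_bsc hε hq]
  linarith [binH_le_one (ε * (1 - 2 * q 1) + q 1)]

lemma mutInfo_bsc_uniform (hε : ε ∈ Set.Icc (0 : ℝ) 1) :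
    mutInfo (fun _ => 2⁻¹) (bsc ε) = 1 - binH ε := by
  rw [mutInfo_bsc hε isPMF_uniform_fin_two,
    show ε * (1 - 2 * 2⁻¹) + 2⁻¹ = (2⁻¹ : ℝ) by ring, binH_two_inv]

lemma halfDuplexBSC_zero : (fun x1 => halfDuplexBSC ε x1 0) = bsc ε := by
  funext x1 y1
  simp [halfDuplexBSC]

lemma halfDuplexBSC_one :
    (fun x1 => halfDuplexBSC ε x1 1) = fun _ y1 => if y1 = 0 then 1 else 0 := by
  funext x1 y1
  simp [halfDuplexBSC]

lemma condMI_halfDuplexBSC_le (hε : ε ∈ Set.Icc (0 : ℝ) 1) {p : Fin 2 × Fin 2 → ℝ}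
    (hp : IsPMF p) : condMI p (halfDuplexBSC ε) ≤ (1 - binH ε) * (1 - marg2 p 1) := by
  calc condMI p (halfDuplexBSC ε) ≤ ∑ x2, marg2 p x2 * ![1 - binH ε, 0] x2 := by
        refine condMI_le_sum hp _ fun x2 hx2 => ?_
        fin_cases x2
        · simpa [halfDuplexBSC_zero] using mutInfo_bsc_le hε (isPMF_cond hp hx2)
        · simpa [halfDuplexBSC_one] using
            (mutInfo_eq_zero_of_const _ (isPMF_cond hp hx2).2).le
    _ = (1 - binH ε) * (1 - marg2 p 1) := by
        simp [Fin.sum_univ_two, (isPMF_marg2 hp).apply_zero_eq, mul_comm]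

lemma condMI_halfDuplexBSC_prod (hε : ε ∈ Set.Icc (0 : ℝ) 1) {q : Fin 2 → ℝ}
    (hq : ∀ x2, 0 ≤ q x2) :
    condMI (fun z : Fin 2 × Fin 2 => 2⁻¹ * q z.2) (halfDuplexBSC ε) = (1 - binH ε) * q 0 := by
  rw [condMI_mul isPMF_uniform_fin_two.2 hq, Fin.sum_univ_two, halfDuplexBSC_zero,
    halfDuplexBSC_one, mutInfo_bsc_uniform hε, mutInfo_eq_zero_of_const _ isPMF_uniform_fin_two.2]
  ring

end BSC

/-- Corollary 1: capacity of the two-hop half-duplex relay channel whose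
source-relay and relay-destination links are binary-symmetric channels with crossover
probabilities `ε1` and `ε2`:
`sup_p min{ I(X1;Y1|X2), I(X2;Y2) }
  = max_{P ∈ [0,1]} min{ (1 − H(ε1))·(1 − P), H(ε2·(1 − 2P) + P) − H(ε2) }`. -/
theorem capacity_two_hop_HD_relay_BSC (ε1 ε2 : ℝ)
    (hε1 : ε1 ∈ Set.Icc (0:ℝ) 1) (hε2 : ε2 ∈ Set.Icc (0:ℝ) 1) :
    sSup {r : ℝ | ∃ p : Fin 2 × Fin 2 → ℝ, IsPMF p ∧
        r = min
          (condMI p (fun x1 x2 y1 : Fin 2 =>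
            if x2 = 0 then (if y1 = x1 then 1 - ε1 else ε1)
            else (if y1 = 0 then 1 else 0)))
          (mutInfo (marg2 p) (fun x2 y2 : Fin 2 => if y2 = x2 then 1 - ε2 else ε2))} =
    sSup {r : ℝ | ∃ P ∈ Set.Icc (0:ℝ) 1,
        r = min ((1 - binH ε1) * (1 - P)) (binH (ε2 * (1 - 2 * P) + P) - binH ε2)} := by
  change sSup {r : ℝ | ∃ p : Fin 2 × Fin 2 → ℝ, IsPMF p ∧
    r = min (condMI p (halfDuplexBSC ε1)) (mutInfo (marg2 p) (bsc ε2))} = _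
  apply csSup_eq_csSup_of_forall_exists_le
  · rintro _ ⟨p, hp, rfl⟩
    have hm := isPMF_marg2 hp
    refine ⟨_, ⟨marg2 p 1, ⟨hm.1 1, ?_⟩, rfl⟩,
      min_le_min (condMI_halfDuplexBSC_le hε1 hp) (mutInfo_bsc hε2 hm).le⟩
    linarith [hm.1 0, hm.apply_zero_eq]
  · rintro _ ⟨P, hP, rfl⟩
    have hq := isPMF_vecCons_one_sub hP
    refine ⟨_, ⟨_, isPMF_prod isPMF_uniform_fin_two hq, rfl⟩, le_of_eq ?_⟩
    rw [condMI_halfDuplexBSC_prod hε1 hq.1, marg2_mul isPMF_uniform_fin_two.2,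
      mutInfo_bsc hε2 hq]
    simp
end
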